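/- Define a 2-colouring of the complete symmetric digraph on ℕ⁺ as follows: for distinct m,n, let t = min{s : m ≢ n (mod 2^s)}; writing the pair so that m ≡ x (mod 2^t) with 0 ≤ x < 2^{t-1} and n ≡ 2^{t-1}+x (mod 2^t), colour (m,n) red and (n,m) blue. Then for every k ∈ ℕ and every infinite monochromatic directed path P, there exists i ∈ {0,...,2^k−1} such that all but finitely many vertices of P are congruent to i modulo 2^k. -/

import Mathlib

/-!
Induction on `k`. Once the path has constant residue modulo `2^k`, consecutive vertices
`m, n` whose residues modulo `2^(k+1)` differ first differ in bit `k`, and then the colour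
of the edge `(m, n)` is bit `k` of `m`. In a path of colour `c`, bit `k` can therefore only
change away from the value `c`, so it changes at most once and is eventually constant.
-/

open scoped Classical

noncomputable def binCol (m n : ℕ) : Fin 2 :=
  if h : ∃ s : ℕ, m % 2 ^ s ≠ n % 2 ^ s then
    (if m % 2 ^ Nat.find h < n % 2 ^ Nat.find h then 0 else 1)
  else 0

lemma binCol_of_mod_eq_of_mod_ne {m n k : ℕ} (heq : m % 2 ^ k = n % 2 ^ k)
    (hne : m % 2 ^ (k + 1) ≠ n % 2 ^ (k + 1)) :
    binCol m n = if m % 2 ^ (k + 1) < n % 2 ^ (k + 1) then 0 else 1 := by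
  have h : ∃ s : ℕ, m % 2 ^ s ≠ n % 2 ^ s := ⟨k + 1, hne⟩
  have hfind : Nat.find h = k + 1 := by
    refine le_antisymm (Nat.find_min' h hne) (Nat.succ_le_of_lt ?_)
    by_contra! hle
    apply Nat.find_spec h
    have hdvd := pow_dvd_pow 2 hle
    rw [← Nat.mod_mod_of_dvd m hdvd, heq, Nat.mod_mod_of_dvd n hdvd]
  rw [binCol, dif_pos h, hfind]

lemma binCol_val_of_bit_ne {m n k : ℕ} (heq : m % 2 ^ k = n % 2 ^ k)
    (hne : m / 2 ^ k % 2 ≠ n / 2 ^ k % 2) :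
    (binCol m n : ℕ) = m / 2 ^ k % 2 := by
  have hm : m % 2 ^ (k + 1) = m % 2 ^ k + 2 ^ k * (m / 2 ^ k % 2) := Nat.mod_pow_succ
  have hn : n % 2 ^ (k + 1) = n % 2 ^ k + 2 ^ k * (n / 2 ^ k % 2) := Nat.mod_pow_succ
  have hm2 := Nat.mod_lt m (two_pos : 0 < 2)
  have hn2 := Nat.mod_lt n (two_pos : 0 < 2)
  rw [binCol_of_mod_eq_of_mod_ne heq (by rw [hm, hn, heq]; simpa using hne)]
  rcases (by omega : m / 2 ^ k % 2 = 0 ∧ n / 2 ^ k % 2 = 1 ∨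
      m / 2 ^ k % 2 = 1 ∧ n / 2 ^ k % 2 = 0) with ⟨hm0, hn1⟩ | ⟨hm1, hn0⟩
  · rw [if_pos (by rw [hm, hn, heq, hm0, hn1]; simp), hm0]; rfl
  · rw [if_neg (by rw [hm, hn, heq, hm1, hn0]; simp), hm1]; rfl

lemma exists_eventually_const_of_ne_succ_imp {α : Type*} {f : ℕ → α} {c : α} {N : ℕ}
    (h : ∀ n ≥ N, f (n + 1) ≠ f n → f n = c) : ∃ M, ∀ n ≥ M, f n = f M := by
  by_cases hleave : ∃ M ≥ N, f M ≠ c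
  · obtain ⟨M, hMN, hMc⟩ := hleave
    refine ⟨M, fun n hn => ?_⟩
    induction n, hn using Nat.le_induction with
    | base => rfl
    | succ n hn ih =>
      by_contra hne
      exact hMc (ih ▸ h n (by omega) (ih ▸ hne))
  · push Not at hleave
    exact ⟨N, fun n hn => (hleave n hn).trans (hleave N le_rfl).symm⟩

lemma exists_eventually_mod_two_pow_eq {v : ℕ → ℕ} {col : Fin 2}
    (hcol : ∀ i, binCol (v i) (v (i + 1)) = col) (k : ℕ) :
    ∃ N, ∀ n ≥ N, v n % 2 ^ k = v N % 2 ^ k := by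
  induction k with
  | zero => exact ⟨0, fun n _ => by simp [Nat.mod_one]⟩
  | succ k ih =>
    obtain ⟨N, hN⟩ := ih
    obtain ⟨M, hM⟩ : ∃ M, ∀ n ≥ M, v n / 2 ^ k % 2 = v M / 2 ^ k % 2 := by
      refine exists_eventually_const_of_ne_succ_imp (c := (col : ℕ)) (N := N) fun n hn hne => ?_
      have heq : v n % 2 ^ k = v (n + 1) % 2 ^ k := (hN n hn).trans (hN (n + 1) (by omega)).symm
      rw [← binCol_val_of_bit_ne heq (Ne.symm hne), hcol]
    refine ⟨max N M, fun n hn => ?_⟩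
    rw [Nat.mod_pow_succ, Nat.mod_pow_succ, hN n (by omega), hN (max N M) (by omega),
      hM n (by omega), hM (max N M) (by omega)]

theorem stmt1 (k : ℕ) (v : ℕ → ℕ)
    (hmono : ∃ col : Fin 2, ∀ i : ℕ, binCol (v i) (v (i + 1)) = col) :
    ∃ i < 2 ^ k, ∃ N : ℕ, ∀ n ≥ N, v n % 2 ^ k = i := by
  obtain ⟨col, hcol⟩ := hmono
  obtain ⟨N, hN⟩ := exists_eventually_mod_two_pow_eq hcol k
  exact ⟨v N % 2 ^ k, Nat.mod_lt _ (by positivity), N, hN⟩
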